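/- arXiv:1910.00836 — 2 statements merged into one kernel-verified Lean document; each statement's English description precedes it below -/
import Mathlib

section
/- Fix d ∈ ℕ and t ∈ ℕ ∪ {0}, put N = (d+1)² + t, and let e_1,…,e_N be the standard basis of ℂ^N. Define linear operators X̂, Ŷ, Ĥ on ℂ^N by X̂e_i = (N−i+1)e_{i−1} for 2 ≤ i ≤ N and X̂e_1 = 0; Ŷe_i = i·e_{i+1} for 1 ≤ i ≤ N−1 and Ŷe_N = 0; Ĥe_i = (N+1−2i)e_i for 1 ≤ i ≤ N (these operators give the N-dimensional irreducible representation of 𝔰𝔩₂). Let v = e_{i_1} + e_{i_2} + … + e_{i_{d+1}} where i_1 = d+1 and i_{k+1} = i_k + 2(d−k+1) for k = 1,…,d. Then the vectors X̂^{m₁} Ŷ^{m₂} Ĥ^{m₃} v, over all m₁, m₂, m₃ ∈ ℕ₀ with m₁ + m₂ + m₃ ≤ d and m₁m₂ = 0, are linearly independent. -/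
/-- The raising operator `X̂` of the `N`-dimensional irreducible representation of `𝔰𝔩₂`:
`X̂ e_i = (N - i + 1) e_{i-1}` (1-indexed), `X̂ e_1 = 0`. -/
noncomputable def opX (N : ℕ) : Module.End ℂ (Fin N → ℂ) :=
  Matrix.mulVecLin (Matrix.of fun i j : Fin N =>
    if (j : ℕ) = (i : ℕ) + 1 then ((N : ℂ) - (j : ℕ)) else 0)

/-- The lowering operator `Ŷ`: `Ŷ e_i = i e_{i+1}` (1-indexed), `Ŷ e_N = 0`. -/
noncomputable def opY (N : ℕ) : Module.End ℂ (Fin N → ℂ) :=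
  Matrix.mulVecLin (Matrix.of fun i j : Fin N =>
    if (i : ℕ) = (j : ℕ) + 1 then ((j : ℕ) + 1 : ℂ) else 0)

/-- The Cartan operator `Ĥ`: `Ĥ e_i = (N + 1 - 2i) e_i` (1-indexed). -/
noncomputable def opH (N : ℕ) : Module.End ℂ (Fin N → ℂ) :=
  Matrix.mulVecLin (Matrix.of fun i j : Fin N =>
    if i = j then ((N : ℂ) - 1 - 2 * (i : ℕ)) else 0)

/-- The 1-indexed positions `i_1 = d + 1`, `i_{k+1} = i_k + 2 (d - k + 1)`
(here `idx d s = i_{s+1}`, `s = 0, …, d`). -/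
def idx (d : ℕ) : ℕ → ℕ
  | 0 => d + 1
  | s + 1 => idx d s + 2 * (d - s)

open Classical in
/-- The vector `v = e_{i_1} + e_{i_2} + ⋯ + e_{i_{d+1}}` in `ℂ^N`. -/
noncomputable def vecV (d N : ℕ) : Fin N → ℂ :=
  fun j => if ∃ s ∈ Finset.range (d + 1), idx d s = (j : ℕ) + 1 then 1 else 0

namespace Stmt6

/-- extension of a vector in `ℂ^N` to a function on `ℕ` -/
noncomputable def Ext {N : ℕ} (u : Fin N → ℂ) : ℕ → ℂ :=
  fun p => if h : p < N then u ⟨p, h⟩ else 0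

variable {N : ℕ}

lemma ext_apply (u : Fin N → ℂ) (p : ℕ) (hp : p < N) : Ext u p = u ⟨p, hp⟩ :=
  dif_pos hp

lemma ext_opX (u : Fin N → ℂ) (p : ℕ) :
    Ext (opX N u) p = ((N : ℂ) - (p + 1 : ℕ)) * Ext u (p + 1) := by
  unfold Ext
  by_cases h : p < N
  · rw [dif_pos h]
    rw [opX, Matrix.mulVecLin_apply, Matrix.mulVec, dotProduct]
    by_cases h1 : p + 1 < N
    · rw [dif_pos h1]
      rw [Finset.sum_eq_single (⟨p + 1, h1⟩ : Fin N)]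
      · simp [Matrix.of_apply]
      · intro b _ hb
        have : (b : ℕ) ≠ p + 1 := fun hc => hb (Fin.ext hc)
        simp [Matrix.of_apply, this]
      · simp
    · rw [dif_neg h1, mul_zero]
      apply Finset.sum_eq_zero
      intro b _
      have : (b : ℕ) ≠ p + 1 := fun hc => h1 (hc ▸ b.isLt)
      simp [Matrix.of_apply, this]
  · rw [dif_neg h, dif_neg (by omega : ¬ p + 1 < N), mul_zero]

lemma ext_opY (u : Fin N → ℂ) (p : ℕ) (hp : p < N) :
    Ext (opY N u) p = (p : ℂ) * Ext u (p - 1) := by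
  unfold Ext
  rw [dif_pos hp]
  rw [opY, Matrix.mulVecLin_apply, Matrix.mulVec, dotProduct]
  rcases Nat.eq_zero_or_pos p with h0 | h0
  · subst h0
    simp only [Nat.cast_zero, zero_mul]
    apply Finset.sum_eq_zero
    intro b _
    simp [Matrix.of_apply]
  · have h1 : p - 1 < N := by omega
    rw [dif_pos h1]
    rw [Finset.sum_eq_single (⟨p - 1, h1⟩ : Fin N)]
    · simp only [Matrix.of_apply, if_pos (show p = (p-1)+1 by omega)]
      have : ((p-1:ℕ):ℂ) = (p:ℂ) - 1 := by push_cast [h0]; ring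
      rw [this]; ring
    · intro b _ hb
      have : p ≠ (b : ℕ) + 1 := by
        intro hc; apply hb; apply Fin.ext; simp; omega
      simp [Matrix.of_apply, this]
    · simp

lemma ext_opH (u : Fin N → ℂ) (p : ℕ) (hp : p < N) :
    Ext (opH N u) p = ((N : ℂ) - 1 - 2 * p) * Ext u p := by
  unfold Ext
  rw [dif_pos hp, dif_pos hp]
  rw [opH, Matrix.mulVecLin_apply, Matrix.mulVec, dotProduct]
  rw [Finset.sum_eq_single (⟨p, hp⟩ : Fin N)]
  · simp [Matrix.of_apply]
  · intro b _ hb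
    simp [Matrix.of_apply, hb.symm]
  · simp


lemma ext_opX_pow (m : ℕ) (u : Fin N → ℂ) (p : ℕ) :
    Ext ((opX N ^ m) u) p =
      (∏ r ∈ Finset.range m, ((N : ℂ) - (p + r + 1 : ℕ))) * Ext u (p + m) := by
  induction m generalizing u with
  | zero => simp
  | succ m ih =>
    rw [pow_succ, Module.End.mul_apply, ih (opX N u), ext_opX,
      Finset.prod_range_succ, show p + (m+1) = (p+m)+1 by omega]
    push_cast
    ring

lemma ext_opY_pow (m : ℕ) (u : Fin N → ℂ) (p : ℕ) (hp : p < N) :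
    Ext ((opY N ^ m) u) p =
      (∏ r ∈ Finset.range m, ((p : ℂ) - (r : ℕ))) * Ext u (p - m) := by
  induction m generalizing u with
  | zero => simp
  | succ m ih =>
    rw [pow_succ, Module.End.mul_apply, ih (opY N u), ext_opY u (p - m) (by omega),
      Finset.prod_range_succ]
    by_cases hm : m ≤ p
    · have : ((p - m : ℕ) : ℂ) = (p : ℂ) - (m : ℕ) := by push_cast [hm]; ring
      rw [this, show p - m - 1 = p - (m+1) by omega]
      ring
    · have hz : (∏ r ∈ Finset.range m, ((p : ℂ) - (r : ℕ))) = 0 := by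
        apply Finset.prod_eq_zero (Finset.mem_range.mpr (by omega : p < m))
        simp
      rw [hz]; ring

lemma ext_opH_pow (m : ℕ) (u : Fin N → ℂ) (p : ℕ) (hp : p < N) :
    Ext ((opH N ^ m) u) p = ((N : ℂ) - 1 - 2 * p) ^ m * Ext u p := by
  induction m generalizing u with
  | zero => simp
  | succ m ih =>
    rw [pow_succ, Module.End.mul_apply, ih (opH N u), ext_opH u p hp]
    ring



/-- 0-indexed positions -/
def P (d s : ℕ) : ℕ := idx d s - 1

lemma idx_ge (d s : ℕ) : d + 1 ≤ idx d s := by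
  induction s with
  | zero => simp [idx]
  | succ s ih => rw [idx]; omega

lemma P_succ (d s : ℕ) : P d (s + 1) = P d s + 2 * (d - s) := by
  have := idx_ge d s
  simp only [P, idx]; omega

lemma PZ (d s : ℕ) (hs : s ≤ d) : (P d s : ℤ) = d + s * (2 * (d : ℤ) + 1 - s) := by
  induction s with
  | zero => simp [P, idx]
  | succ s ih =>
    rw [P_succ]
    have h1 : ((P d s + 2 * (d - s) : ℕ) : ℤ) = (P d s : ℤ) + 2 * ((d : ℤ) - s) := by
      push_cast [Nat.cast_sub (by omega : s ≤ d)]; ring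
    rw [h1, ih (by omega)]
    push_cast
    ring

lemma Pdiff (d s s' : ℕ) (hs : s ≤ d) (hs' : s' ≤ d) :
    (P d s : ℤ) - P d s' = ((s : ℤ) - s') * (2 * (d : ℤ) + 1 - s - s') := by
  rw [PZ d s hs, PZ d s' hs']; ring

lemma P_ge (d s : ℕ) : d ≤ P d s := by
  have := idx_ge d s; simp only [P]; omega

lemma P_le (d s : ℕ) (hs : s ≤ d) : P d s ≤ d * d + 2 * d := by
  have h1 : (P d s : ℤ) ≤ (d : ℤ) * d + 2 * d := by
    rw [PZ d s hs]
    have h2 : (0 : ℤ) ≤ ((d : ℤ) - s) * ((d : ℤ) + 1 - s) := by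
      apply mul_nonneg <;> omega
    nlinarith [h2]
  exact_mod_cast h1

lemma P_inj (d s s' : ℕ) (hs : s ≤ d) (hs' : s' ≤ d) (h : P d s = P d s') : s = s' := by
  by_contra hne
  have h0 : (P d s : ℤ) - P d s' = ((s : ℤ) - s') * (2 * (d : ℤ) + 1 - s - s') :=
    Pdiff d s s' hs hs'
  have h1 : (P d s : ℤ) - P d s' = 0 := by rw [h]; ring
  have h2 : (2 * (d : ℤ) + 1 - s - s') > 0 := by omega
  have h3 : ((s : ℤ) - s') ≠ 0 := by
    intro hc; apply hne; omega
  rw [h1] at h0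
  rcases mul_eq_zero.mp h0.symm with h | h
  · exact h3 h
  · omega


open Classical in
noncomputable def chi (d q : ℕ) : ℂ :=
  if ∃ s ∈ Finset.range (d + 1), idx d s = q + 1 then 1 else 0

noncomputable def cX (N p m : ℕ) : ℂ := ∏ r ∈ Finset.range m, ((N : ℂ) - ((p + r + 1 : ℕ) : ℂ))
noncomputable def cY (p m : ℕ) : ℂ := ∏ r ∈ Finset.range m, ((p : ℂ) - ((r : ℕ) : ℂ))
noncomputable def mu (N q : ℕ) : ℂ := (N : ℂ) - 1 - 2 * (q : ℂ)

lemma ext_vecV (d : ℕ) {N : ℕ} (q : ℕ) (hq : q < N) :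
    Ext (vecV d N) q = chi d q := by
  simp only [Ext, vecV, chi, dif_pos hq]

lemma chi_eq_one (d s : ℕ) (hs : s ≤ d) : chi d (P d s) = 1 := by
  rw [chi, if_pos]
  exact ⟨s, Finset.mem_range.mpr (by omega), by have := idx_ge d s; simp only [P]; omega⟩

lemma chi_cases (d q : ℕ) : chi d q = 0 ∨ ∃ s ≤ d, P d s = q := by
  rw [chi]
  split
  · rename_i h
    obtain ⟨s, hs, hidx⟩ := h
    exact Or.inr ⟨s, by have := Finset.mem_range.mp hs; omega, by
      have := idx_ge d s; simp only [P]; omega⟩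
  · exact Or.inl rfl

lemma cX_ne_zero {N p m : ℕ} (h : p + m < N) : cX N p m ≠ 0 := by
  rw [cX]
  apply Finset.prod_ne_zero_iff.mpr
  intro r hr
  have hr' : r < m := Finset.mem_range.mp hr
  have : (p + r + 1) < N := by omega
  intro hc
  have : ((p + r + 1 : ℕ) : ℂ) = (N : ℂ) := by linear_combination -hc
  exact absurd (Nat.cast_inj.mp this) (by omega)

lemma cX_eq_zero {N p m : ℕ} (hp : p < N) (h : N ≤ p + m) : cX N p m = 0 := by
  rw [cX]
  apply Finset.prod_eq_zero (Finset.mem_range.mpr (show N - p - 1 < m by omega))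
  rw [show p + (N - p - 1) + 1 = N by omega]
  ring

lemma cY_ne_zero {p m : ℕ} (h : m ≤ p) : cY p m ≠ 0 := by
  rw [cY]
  apply Finset.prod_ne_zero_iff.mpr
  intro r hr
  have hr' : r < m := Finset.mem_range.mp hr
  intro hc
  have : ((r : ℕ) : ℂ) = (p : ℂ) := by linear_combination -hc
  exact absurd (Nat.cast_inj.mp this) (by omega)

lemma cY_eq_zero {p m : ℕ} (h : p < m) : cY p m = 0 := by
  rw [cY]
  apply Finset.prod_eq_zero (Finset.mem_range.mpr h)
  ring

lemma w_formula (d N m1 m2 m3 p : ℕ) (hp : p < N) :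
    Ext ((opX N ^ m1) ((opY N ^ m2) ((opH N ^ m3) (vecV d N)))) p =
      cX N p m1 * cY (p + m1) m2 * mu N (p + m1 - m2) ^ m3 * chi d (p + m1 - m2) := by
  rw [ext_opX_pow]
  by_cases h1 : p + m1 < N
  · rw [ext_opY_pow _ _ _ h1, ext_opH_pow _ _ _ (by omega : p + m1 - m2 < N),
      ext_vecV d _ (by omega : p + m1 - m2 < N)]
    rw [cX, cY, mu]
    ring
  · rw [show Ext ((opY N ^ m2) ((opH N ^ m3) (vecV d N))) (p + m1) = 0 by
      simp [Ext, dif_neg h1]]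
    rw [cX_eq_zero hp (by omega)]
    ring

lemma poly_aux (n D : ℕ) (hnD : n ≤ D) (c : ℕ → ℂ) (hc : ∀ j, n < j → c j = 0)
    (x : ℕ → ℂ) (hx : ∀ s ≤ n, ∀ s' ≤ n, x s = x s' → s = s')
    (h : ∀ s ≤ n, ∑ j ∈ Finset.range (D + 1), c j * (x s) ^ j = 0) :
    ∀ j, c j = 0 := by
  set F : Polynomial ℂ := ∑ j ∈ Finset.range (D + 1), Polynomial.monomial j (c j) with hF
  have hcoeff : ∀ j, F.coeff j = if j < D + 1 then c j else 0 := by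
    intro j
    rw [hF, Polynomial.finset_sum_coeff]
    rw [Finset.sum_congr rfl (fun i _ => Polynomial.coeff_monomial)]
    by_cases hj : j < D + 1
    · rw [Finset.sum_ite_eq' (Finset.range (D + 1)) j c, if_pos (Finset.mem_range.mpr hj),
        if_pos hj]
    · rw [if_neg hj]
      apply Finset.sum_eq_zero
      intro i hi
      rw [if_neg]
      intro hc'
      exact hj (hc' ▸ Finset.mem_range.mp hi)
  have hdeg : F.natDegree ≤ n := by
    apply Polynomial.natDegree_le_iff_coeff_eq_zero.mpr
    intro j hj
    rw [hcoeff j]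
    split
    · exact hc j hj
    · rfl
  have heval : ∀ s ≤ n, F.eval (x s) = 0 := by
    intro s hs
    rw [hF, Polynomial.eval_finset_sum]
    simpa only [Polynomial.eval_monomial] using h s hs
  have hFzero : F = 0 := by
    apply Polynomial.eq_zero_of_natDegree_lt_card_of_eval_eq_zero' F
      ((Finset.range (n + 1)).image x)
    · intro y hy
      obtain ⟨s, hs, rfl⟩ := Finset.mem_image.mp hy
      exact heval s (by have := Finset.mem_range.mp hs; omega)
    · rw [Finset.card_image_of_injOn, Finset.card_range]
      · omega
      · intro s hs s' hs' hxy
        exact hx s (by have := Finset.mem_range.mp hs; omega)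
          s' (by have := Finset.mem_range.mp hs'; omega) hxy
  intro j
  by_cases hj : j < D + 1
  · have := hcoeff j
    rw [hFzero, if_pos hj] at this
    simpa using this.symm
  · exact hc j (by omega)

set_option maxHeartbeats 1000000 in
lemma engine (d N : ℕ) (hN : d * d + 2 * d < N) (A : ℕ → ℕ → ℕ → ℂ)
    (hA : ∀ m1 m2 m3, ¬(m1 + m2 + m3 ≤ d ∧ m1 * m2 = 0) → A m1 m2 m3 = 0)
    (master : ∀ p, p < N →
      ∑ q ∈ Finset.range (d + 1) ×ˢ Finset.range (d + 1),
        (cX N p q.1 * cY (p + q.1) q.2 * chi d (p + q.1 - q.2) *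
          ∑ j ∈ Finset.range (d + 1), A q.1 q.2 j * mu N (p + q.1 - q.2) ^ j) = 0) :
    ∀ m1 m2 m3, A m1 m2 m3 = 0 := by
  set a : ℤ → ℕ → ℂ := fun k j => A (-k).toNat k.toNat j with ha
  have haA : ∀ m1 m2 j, m1 * m2 = 0 → A m1 m2 j = a ((m2 : ℤ) - m1) j := by
    intro m1 m2 j hmm
    rcases Nat.mul_eq_zero.mp hmm with h0 | h0
    · have e1 : (-((m2 : ℤ) - m1)).toNat = m1 := by omega
      have e2 : ((m2 : ℤ) - (m1 : ℤ)).toNat = m2 := by omega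
      simp only [ha, e1, e2]
    · have e1 : (-((m2 : ℤ) - m1)).toNat = m1 := by omega
      have e2 : ((m2 : ℤ) - (m1 : ℤ)).toNat = m2 := by omega
      simp only [ha, e1, e2]
  have hmu_inj : ∀ s, s ≤ d → ∀ s', s' ≤ d → mu N (P d s) = mu N (P d s') → s = s' := by
    intro s hs s' hs' h
    apply P_inj d s s' hs hs'
    have h2 : ((P d s : ℕ) : ℂ) = ((P d s' : ℕ) : ℂ) := by
      rw [mu, mu] at h; linear_combination -h / 2
    exact_mod_cast h2
  -- generic "a term of the master sum vanishes" helper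
  have hterm : ∀ (p m1 m2 : ℕ),
      (∀ s', s' ≤ d → ((P d s' : ℕ) : ℤ) = (p : ℤ) + m1 - m2 → m1 * m2 = 0 →
        m2 ≤ p + m1 → ∀ j, A m1 m2 j = 0) →
      cX N p m1 * cY (p + m1) m2 * chi d (p + m1 - m2) *
        (∑ j ∈ Finset.range (d + 1), A m1 m2 j * mu N (p + m1 - m2) ^ j) = 0 := by
    intro p m1 m2 hcond
    rcases chi_cases d (p + m1 - m2) with hchi | ⟨s', hs', hPs'⟩
    · rw [hchi]; ring
    · by_cases hpm : p + m1 < m2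
      · rw [cY_eq_zero hpm]; ring
      · by_cases hmm : m1 * m2 = 0
        · have hj : ∀ j, A m1 m2 j = 0 :=
            hcond s' hs' (by push_cast; omega) hmm (by omega)
          rw [Finset.sum_eq_zero (fun j _ => by rw [hj j]; ring)]
          ring
        · rw [Finset.sum_eq_zero (fun j _ => by
            rw [hA m1 m2 j (fun hcontra => hmm hcontra.2)]; ring)]
          ring
  -- main downward induction
  have main : ∀ n : ℕ, ∀ k : ℤ, (d : ℤ) - n < k.natAbs → ∀ j, a k j = 0 := by
    intro n
    induction n with
    | zero =>
      intro k hk j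
      apply hA
      intro hcontra
      have := hcontra.1
      omega
    | succ n ih =>
      by_cases hnd : d < n
      · intro k hk j
        exact ih k (by omega) j
      -- now n < d
      obtain ⟨K, hKdef⟩ : ∃ K : ℕ, K = d - n := ⟨_, rfl⟩
      have hKd : K ≤ d := by omega
      have hKZ : (K : ℤ) = (d : ℤ) - n := by omega
      have part1 : ∀ j, a (-(K : ℤ)) j = 0 := by
        apply poly_aux n d (by omega) _ ?hc (fun s => mu N (P d s))
          (fun s hs s' hs' hh => hmu_inj s (by omega) s' (by omega) hh)
        case hc =>
          intro j hj
          rw [show a (-(K : ℤ)) j = A K 0 j by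
            have e1 : (-(-(K : ℤ))).toNat = K := by omega
            have e2 : (-(K : ℤ)).toNat = 0 := by omega
            simp only [ha, e1, e2]]
          apply hA
          intro hcontra
          omega
        intro s hs
        obtain ⟨p, hpdef⟩ : ∃ p : ℕ, p = P d s - K := ⟨_, rfl⟩
        have hKP : K ≤ P d s := le_trans hKd (P_ge d s)
        have hPsd : P d s ≤ d * d + 2 * d := P_le d s (by omega)
        have hpK : p + K = P d s := by omega
        have hpN : p < N := by omega
        have hm := master p hpN
        rw [Finset.sum_eq_single_of_mem ((K, 0) : ℕ × ℕ)
          (Finset.mem_product.mpr ⟨Finset.mem_range.mpr (by omega),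
            Finset.mem_range.mpr (by omega)⟩) ?hz] at hm
        case hz =>
          intro q hq hne
          obtain ⟨m1, m2⟩ := q
          apply hterm p m1 m2
          intro s' hs' hPs' hmm hm2le j
          have hp : (p : ℤ) = (P d s : ℤ) - K := by omega
          have hk2 : ((m2 : ℤ) - m1) = (P d s : ℤ) - (P d s' : ℤ) - K := by omega
          by_cases hss : s' = s
          · exfalso
            apply hne
            subst hss
            have : m1 = K ∧ m2 = 0 := by
              rcases Nat.mul_eq_zero.mp hmm with h0 | h0 <;> omega
            rw [Prod.ext_iff]
            exact ⟨this.1, this.2⟩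
          · rw [haA m1 m2 j hmm]
            apply ih _ _ j
            have hPd := Pdiff d s s' (by omega) hs'
            rcases lt_or_gt_of_ne hss with hlt | hgt
            · -- s' < s : gap ≥ 2K+2, k ≥ K+2
              have h1 : (1 : ℤ) ≤ (s : ℤ) - s' := by omega
              have h2 : 2 * (K : ℤ) + 2 ≤ 2 * (d : ℤ) + 1 - s - s' := by omega
              have h3 : (2 * (d : ℤ) + 1 - s - s') ≤
                  ((s : ℤ) - s') * (2 * (d : ℤ) + 1 - s - s') :=
                le_mul_of_one_le_left (by omega) h1
              have h4 : 2 * (K : ℤ) + 2 ≤ (P d s : ℤ) - (P d s' : ℤ) := by omega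
              omega
            · -- s' > s : gap ≥ 1, k ≤ -K-1
              have hPd2 := Pdiff d s' s hs' (by omega)
              have h1 : (1 : ℤ) ≤ (s' : ℤ) - s := by omega
              have h2 : (1 : ℤ) ≤ 2 * (d : ℤ) + 1 - s' - s := by omega
              have h3 : (1 : ℤ) ≤ ((s' : ℤ) - s) * (2 * (d : ℤ) + 1 - s' - s) := by
                nlinarith
              have h4 : (1 : ℤ) ≤ (P d s' : ℤ) - (P d s : ℤ) := by omega
              omega
        -- extract the surviving term
        have hone : chi d (p + K - 0) = 1 := by
          rw [Nat.sub_zero, hpK]; exact chi_eq_one d s (by omega)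
        have hcy : cY (p + K) 0 = 1 := by simp [cY]
        rw [hone, hcy] at hm
        have hm2 : cX N p K * (∑ j ∈ Finset.range (d + 1),
            A K 0 j * mu N (p + K - 0) ^ j) = 0 := by linear_combination hm
        rcases mul_eq_zero.mp hm2 with h | h
        · exact absurd h (cX_ne_zero (by omega))
        · rw [← h]
          apply Finset.sum_congr rfl
          intro j _
          rw [show A K 0 j = a (-(K : ℤ)) j by
            have e1 : (-(-(K : ℤ))).toNat = K := by omega
            have e2 : (-(K : ℤ)).toNat = 0 := by omega
            simp only [ha, e1, e2], Nat.sub_zero, hpK]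
      have part2 : ∀ j, a ((K : ℤ)) j = 0 := by
        apply poly_aux n d (by omega) _ ?hc (fun s => mu N (P d s))
          (fun s hs s' hs' hh => hmu_inj s (by omega) s' (by omega) hh)
        case hc =>
          intro j hj
          rw [show a ((K : ℤ)) j = A 0 K j by
            have e1 : (-(K : ℤ)).toNat = 0 := by omega
            have e2 : ((K : ℤ)).toNat = K := by omega
            simp only [ha, e1, e2]]
          apply hA
          intro hcontra
          omega
        intro s hs
        obtain ⟨p, hpdef⟩ : ∃ p : ℕ, p = P d s + K := ⟨_, rfl⟩
        have hPsd : P d s ≤ d * d + 2 * d := P_le d s (by omega)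
        have hpN : p < N := by
          have hPd := Pdiff d d s (le_refl d) (by omega)
          have h1 : (K : ℤ) ≤ (d : ℤ) - s := by omega
          have h2 : (K : ℤ) + 1 ≤ 2 * (d : ℤ) + 1 - d - s := by omega
          have h3 : (K : ℤ) * ((K : ℤ) + 1) ≤ ((d : ℤ) - s) * (2 * (d : ℤ) + 1 - d - s) := by
            apply mul_le_mul h1 h2 (by omega) (by omega)
          have h4 : (K : ℤ) ≤ (P d d : ℤ) - (P d s : ℤ) := by nlinarith
          have h5 := P_le d d (le_refl d)
          omega
        have hm := master p hpN
        rw [Finset.sum_eq_single_of_mem ((0, K) : ℕ × ℕ)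
          (Finset.mem_product.mpr ⟨Finset.mem_range.mpr (by omega),
            Finset.mem_range.mpr (by omega)⟩) ?hz] at hm
        case hz =>
          intro q hq hne
          obtain ⟨m1, m2⟩ := q
          apply hterm p m1 m2
          intro s' hs' hPs' hmm hm2le j
          have hp : (p : ℤ) = (P d s : ℤ) + K := by omega
          have hk2 : ((m2 : ℤ) - m1) = (P d s : ℤ) - (P d s' : ℤ) + K := by omega
          by_cases hss : s' = s
          · exfalso
            apply hne
            subst hss
            have : m1 = 0 ∧ m2 = K := by
              rcases Nat.mul_eq_zero.mp hmm with h0 | h0 <;> omega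
            rw [Prod.ext_iff]
            exact ⟨this.1, this.2⟩
          · rw [haA m1 m2 j hmm]
            have hPd := Pdiff d s s' (by omega) hs'
            rcases lt_or_gt_of_ne hss with hlt | hgt
            · -- s' < s : gap ≥ 1, k ≥ K+1
              apply ih _ _ j
              have h1 : (1 : ℤ) ≤ (s : ℤ) - s' := by omega
              have h2 : (1 : ℤ) ≤ 2 * (d : ℤ) + 1 - s - s' := by omega
              have h3 : (1 : ℤ) ≤ ((s : ℤ) - s') * (2 * (d : ℤ) + 1 - s - s') := by
                nlinarith
              have h4 : (1 : ℤ) ≤ (P d s : ℤ) - (P d s' : ℤ) := by omega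
              omega
            · -- s' > s : gap ≥ 2(d-s) ≥ 2K
              have hPd2 := Pdiff d s' s hs' (by omega)
              have h1 : (1 : ℤ) ≤ (s' : ℤ) - s := by omega
              have h2 : (s' : ℤ) - s ≤ (d : ℤ) - s := by omega
              have h3 : 2 * ((d : ℤ) - s) ≤ ((s' : ℤ) - s) * (2 * (d : ℤ) + 1 - s' - s) := by
                nlinarith [mul_nonneg (by omega : (0:ℤ) ≤ (s' : ℤ) - s - 1)
                  (by omega : (0:ℤ) ≤ 2 * ((d : ℤ) - s) - ((s' : ℤ) - s))]
              have h4 : 2 * (K : ℤ) ≤ (P d s' : ℤ) - (P d s : ℤ) := by omega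
              by_cases hkK : (m2 : ℤ) - m1 = -(K : ℤ)
              · rw [hkK]; exact part1 j
              · exact ih _ (by omega) j
        -- extract the surviving term
        have hone : chi d (p + 0 - K) = 1 := by
          rw [Nat.add_zero, show p - K = P d s by omega]
          exact chi_eq_one d s (by omega)
        have hcx : cX N p 0 = 1 := by simp [cX]
        rw [hone, hcx] at hm
        have hm2 : cY (p + 0) K * (∑ j ∈ Finset.range (d + 1),
            A 0 K j * mu N (p + 0 - K) ^ j) = 0 := by linear_combination hm
        rcases mul_eq_zero.mp hm2 with h | h
        · exact absurd h (cY_ne_zero (by omega))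
        · rw [← h]
          apply Finset.sum_congr rfl
          intro j _
          rw [show A 0 K j = a ((K : ℤ)) j by
            have e1 : (-(K : ℤ)).toNat = 0 := by omega
            have e2 : ((K : ℤ)).toNat = K := by omega
            simp only [ha, e1, e2], Nat.add_zero, show p - K = P d s by omega]
      intro k hk j
      by_cases hkn : (d : ℤ) - n < k.natAbs
      · exact ih k hkn j
      · have : k = (K : ℤ) ∨ k = -(K : ℤ) := by omega
        rcases this with h | h
        · rw [h]; exact part2 j
        · rw [h]; exact part1 j
  intro m1 m2 m3
  by_cases hc : m1 + m2 + m3 ≤ d ∧ m1 * m2 = 0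
  · rw [haA m1 m2 m3 hc.2]
    exact main (d + 1) _ (by omega) m3
  · exact hA m1 m2 m3 hc

end Stmt6

open Stmt6 in
set_option maxHeartbeats 1000000 in
/-- with `N = (d+1)² + t` and `v` as above, the vectors
`X̂^{m₁} Ŷ^{m₂} Ĥ^{m₃} v` over all `m₁ + m₂ + m₃ ≤ d` with `m₁ m₂ = 0` are linearly
independent. -/
theorem stmt_6 (d t : ℕ) (hd : 0 < d) :
    LinearIndependent ℂ
      (fun m : {m : ℕ × ℕ × ℕ // m.1 + m.2.1 + m.2.2 ≤ d ∧ m.1 * m.2.1 = 0} =>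
        ((opX ((d + 1) ^ 2 + t) ^ m.val.1 * opY ((d + 1) ^ 2 + t) ^ m.val.2.1 *
          opH ((d + 1) ^ 2 + t) ^ m.val.2.2 :
            Module.End ℂ (Fin ((d + 1) ^ 2 + t) → ℂ)) (vecV d ((d + 1) ^ 2 + t)))) := by
  classical
  set N := (d + 1) ^ 2 + t with hNdef
  rw [linearIndependent_iff']
  intro sF g hrel i hi
  set A : ℕ → ℕ → ℕ → ℂ := fun m1 m2 m3 =>
    if h : m1 + m2 + m3 ≤ d ∧ m1 * m2 = 0 then
      (if (⟨(m1, m2, m3), h⟩ :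
          {m : ℕ × ℕ × ℕ // m.1 + m.2.1 + m.2.2 ≤ d ∧ m.1 * m.2.1 = 0}) ∈ sF then
        g ⟨(m1, m2, m3), h⟩ else 0)
    else 0 with hAdef
  have hA : ∀ m1 m2 m3, ¬(m1 + m2 + m3 ≤ d ∧ m1 * m2 = 0) → A m1 m2 m3 = 0 := by
    intro m1 m2 m3 h
    simp only [hAdef, dif_neg h]
  have hAg : ∀ j : {m : ℕ × ℕ × ℕ // m.1 + m.2.1 + m.2.2 ≤ d ∧ m.1 * m.2.1 = 0},
      j ∈ sF → A j.val.1 j.val.2.1 j.val.2.2 = g j := by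
    rintro ⟨⟨m1, m2, m3⟩, hc⟩ hj
    simp only [hAdef]
    rw [dif_pos hc, if_pos hj]
  have hmaster : ∀ p, p < N →
      ∑ q ∈ Finset.range (d + 1) ×ˢ Finset.range (d + 1),
        (cX N p q.1 * cY (p + q.1) q.2 * chi d (p + q.1 - q.2) *
          ∑ j ∈ Finset.range (d + 1), A q.1 q.2 j * mu N (p + q.1 - q.2) ^ j) = 0 := by
    intro p hp
    have hterm : ∀ j : {m : ℕ × ℕ × ℕ // m.1 + m.2.1 + m.2.2 ≤ d ∧ m.1 * m.2.1 = 0},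
        ((opX N ^ j.val.1 * opY N ^ j.val.2.1 * opH N ^ j.val.2.2) (vecV d N)) ⟨p, hp⟩ =
          cX N p j.val.1 * cY (p + j.val.1) j.val.2.1 *
            mu N (p + j.val.1 - j.val.2.1) ^ j.val.2.2 * chi d (p + j.val.1 - j.val.2.1) := by
      intro j
      have hw := w_formula d N j.val.1 j.val.2.1 j.val.2.2 p hp
      rw [ext_apply _ p hp] at hw
      rw [Module.End.mul_apply, Module.End.mul_apply]
      exact hw
    have h0 := congrFun hrel ⟨p, hp⟩
    rw [Finset.sum_apply] at h0
    simp only [Pi.smul_apply, smul_eq_mul, Pi.zero_apply, hterm] at h0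
    -- h0 : ∑ i ∈ sF, g i * (cX ... * cY ... * mu ... ^ ... * chi ...) = 0
    set emb : {m : ℕ × ℕ × ℕ // m.1 + m.2.1 + m.2.2 ≤ d ∧ m.1 * m.2.1 = 0} → (ℕ × ℕ) × ℕ :=
      fun j => ((j.val.1, j.val.2.1), j.val.2.2) with hemb
    set T : Finset ((ℕ × ℕ) × ℕ) := sF.image emb with hT
    have hTB : T ⊆ (Finset.range (d + 1) ×ˢ Finset.range (d + 1)) ×ˢ Finset.range (d + 1) := by
      intro m hm
      obtain ⟨j, hj, rfl⟩ := Finset.mem_image.mp hm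
      have h2 := j.2.1
      simp only [hemb]
      refine Finset.mem_product.mpr ⟨Finset.mem_product.mpr ⟨?_, ?_⟩, ?_⟩ <;>
        · apply Finset.mem_range.mpr; simp only []; omega
    have trans1 :
        ∑ q ∈ Finset.range (d + 1) ×ˢ Finset.range (d + 1),
          (cX N p q.1 * cY (p + q.1) q.2 * chi d (p + q.1 - q.2) *
            ∑ j ∈ Finset.range (d + 1), A q.1 q.2 j * mu N (p + q.1 - q.2) ^ j) =
        ∑ m ∈ (Finset.range (d + 1) ×ˢ Finset.range (d + 1)) ×ˢ Finset.range (d + 1),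
          A m.1.1 m.1.2 m.2 * (cX N p m.1.1 * cY (p + m.1.1) m.1.2 *
            mu N (p + m.1.1 - m.1.2) ^ m.2 * chi d (p + m.1.1 - m.1.2)) := by
      rw [Finset.sum_product (s := Finset.range (d + 1) ×ˢ Finset.range (d + 1))
        (t := Finset.range (d + 1))]
      apply Finset.sum_congr rfl
      intro q _
      rw [Finset.mul_sum]
      apply Finset.sum_congr rfl
      intro j _
      ring
    have trans2 :
        ∑ m ∈ (Finset.range (d + 1) ×ˢ Finset.range (d + 1)) ×ˢ Finset.range (d + 1),
          A m.1.1 m.1.2 m.2 * (cX N p m.1.1 * cY (p + m.1.1) m.1.2 *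
            mu N (p + m.1.1 - m.1.2) ^ m.2 * chi d (p + m.1.1 - m.1.2)) =
        ∑ m ∈ T,
          A m.1.1 m.1.2 m.2 * (cX N p m.1.1 * cY (p + m.1.1) m.1.2 *
            mu N (p + m.1.1 - m.1.2) ^ m.2 * chi d (p + m.1.1 - m.1.2)) := by
      apply (Finset.sum_subset hTB ?_).symm
      intro m _ hmT
      have hAz : A m.1.1 m.1.2 m.2 = 0 := by
        simp only [hAdef]
        split
        · rename_i hcond
          rw [if_neg]
          intro hmem
          apply hmT
          rw [hT]
          exact Finset.mem_image.mpr ⟨⟨(m.1.1, m.1.2, m.2), hcond⟩, hmem, rfl⟩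
        · rfl
      rw [hAz, zero_mul]
    have trans3 :
        ∑ m ∈ T,
          A m.1.1 m.1.2 m.2 * (cX N p m.1.1 * cY (p + m.1.1) m.1.2 *
            mu N (p + m.1.1 - m.1.2) ^ m.2 * chi d (p + m.1.1 - m.1.2)) =
        ∑ j ∈ sF, g j * (cX N p j.val.1 * cY (p + j.val.1) j.val.2.1 *
            mu N (p + j.val.1 - j.val.2.1) ^ j.val.2.2 * chi d (p + j.val.1 - j.val.2.1)) := by
      rw [hT]
      rw [Finset.sum_image]
      · apply Finset.sum_congr rfl
        intro j hj
        rw [hemb]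
        simp only []
        rw [hAg j hj]
      · intro x hx y hy hxy
        apply Subtype.ext
        simp only [hemb, Prod.ext_iff] at hxy
        obtain ⟨⟨e1, e2⟩, e3⟩ := hxy
        exact Prod.ext e1 (Prod.ext e2 e3)
    rw [trans1, trans2, trans3]
    exact h0
  have hNbig : d * d + 2 * d < N := by
    have : (d + 1) ^ 2 = d * d + 2 * d + 1 := by ring
    omega
  have hAzero := engine d N hNbig A hA hmaster
  rw [← hAg i hi]
  exact hAzero _ _ _
end

section
/- Let X₁=E₁₂, X₂=E₂₃, X₃=E₁₃, Y₁=E₂₁, Y₂=E₃₂, Y₃=E₃₁, H₁=E₁₁−E₂₂, H₂=E₂₂−E₃₃ be the standard basis of 𝔰𝔩₃. Let V₁ = V₂ = ℂ³, with π₁(Z)u = Zu on V₁ and π₂(Z)u = −Zᵀu on V₂; let e₁,e₂,e₃ be the standard basis of V₁ and f₁=e₃, f₂=−e₂, f₃=e₁ a basis of V₂. For m₁,m₂ ∈ ℕ₀, let ψ₁ and ψ₂ be the induced representations of 𝔰𝔩₃ on the symmetric powers Sym^{m₁}(V₁) and Sym^{m₂}(V₂) (acting as derivations on products), and let ψ =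 ψ₁ ⊗ ψ₂ on Sym^{m₁}(V₁) ⊗ Sym^{m₂}(V₂), extended to U(𝔰𝔩₃); set v_{i,j,k} = ψ(Y₁^i Y₂^j Y₃^k)(e₁^{m₁} ⊗ f₁^{m₂}) for i,j,k ∈ ℕ₀. Then for every d ∈ ℕ₀ with m₁ ≥ d and m₂ ≥ d, the vectors v_{k,ℓ,m} over all k,ℓ,m ∈ ℕ₀ with k + ℓ + m ≤ d are linearly independent. -/
open scoped TensorProduct

/-- The polynomial realization of symmetric powers: the polynomial ring in the three basis
vectors of `ℂ³`, whose degree-`m` homogeneous component is `Sym^m(ℂ³)`. -/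
abbrev PolySpace : Type := MvPolynomial (Fin 3) ℂ

/-- The derivation action on polynomials induced by a linear action on `ℂ³` with matrix `M`
in the chosen basis `w₀, w₁, w₂`: it sends `w_j` to `Σ_i M i j • w_i` and acts by the
Leibniz rule on products. -/
noncomputable def derOp (M : Matrix (Fin 3) (Fin 3) ℂ) : Module.End ℂ PolySpace :=
  ∑ i : Fin 3, ∑ j : Fin 3, M i j •
    ((LinearMap.mulLeft ℂ (MvPolynomial.X i)).comp (MvPolynomial.pderiv j).toLinearMap)

/-- The change-of-basis matrix from the basis `f₁ = e₃, f₂ = -e₂, f₃ = e₁` to the standard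
basis of `ℂ³` (its own inverse). -/
noncomputable def Bmat : Matrix (Fin 3) (Fin 3) ℂ := !![0, 0, 1; 0, -1, 0; 1, 0, 0]

/-- The representation `ψ = ψ₁ ⊗ ψ₂` of a matrix `Z ∈ 𝔰𝔩₃` on
`Sym(V₁) ⊗ Sym(V₂)`: `ψ₁` is the derivation action of `π₁(Z) = Z` (in the basis
`e₁, e₂, e₃`), and `ψ₂` is the derivation action of `π₂(Z) = -Zᵀ` written in the basis
`f₁ = e₃, f₂ = -e₂, f₃ = e₁`, i.e. with matrix `B (-Zᵀ) B`. -/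
noncomputable def psiOp (Z : Matrix (Fin 3) (Fin 3) ℂ) :
    Module.End ℂ (PolySpace ⊗[ℂ] PolySpace) :=
  LinearMap.rTensor PolySpace (derOp Z) +
    LinearMap.lTensor PolySpace (derOp (Bmat * (-(Matrix.transpose Z)) * Bmat))

noncomputable def X₁mat : Matrix (Fin 3) (Fin 3) ℂ := Matrix.single 0 1 1
noncomputable def X₂mat : Matrix (Fin 3) (Fin 3) ℂ := Matrix.single 1 2 1
noncomputable def X₃mat : Matrix (Fin 3) (Fin 3) ℂ := Matrix.single 0 2 1
noncomputable def Y₁mat : Matrix (Fin 3) (Fin 3) ℂ := Matrix.single 1 0 1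
noncomputable def Y₂mat : Matrix (Fin 3) (Fin 3) ℂ := Matrix.single 2 1 1
noncomputable def Y₃mat : Matrix (Fin 3) (Fin 3) ℂ := Matrix.single 2 0 1
noncomputable def H₁mat : Matrix (Fin 3) (Fin 3) ℂ :=
  Matrix.single 0 0 1 - Matrix.single 1 1 1
noncomputable def H₂mat : Matrix (Fin 3) (Fin 3) ℂ :=
  Matrix.single 1 1 1 - Matrix.single 2 2 1

/-- The vector `v_{k,ℓ,m} = ψ(Y₁^k Y₂^ℓ Y₃^m)(e₁^{m₁} ⊗ f₁^{m₂})`. -/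
noncomputable def vklm (m₁ m₂ k ℓ m : ℕ) : PolySpace ⊗[ℂ] PolySpace :=
  (psiOp Y₁mat ^ k * psiOp Y₂mat ^ ℓ * psiOp Y₃mat ^ m)
    ((MvPolynomial.X 0 ^ m₁) ⊗ₜ[ℂ] (MvPolynomial.X 0 ^ m₂))

/-!
Write `D i j = X i ∂ⱼ` (`xPDeriv i j`). Then `ψ(Y₁) = D₁₀ ⊗ 1 + 1 ⊗ D₂₁`,
`ψ(Y₂) = D₂₁ ⊗ 1 + 1 ⊗ D₁₀` and `ψ(Y₃) = D₂₀ ⊗ 1 - 1 ⊗ D₂₀`, whose two summands commute, so the binomial theorem gives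
`v_{k,ℓ,m}` as a double sum over `s ≤ m`, `t ≤ k` of monomials
`x₀^(m₁-s-t) x₁^t x₂^s ⊗ x₀^(…) x₁^(ℓ-(k-t)) x₂^((m-s)+(k-t))`.
Only the term `s = m`, `t = k` has a second factor free of `x₂`. Hence the coefficient of
`x₀^(m₁-m-k) x₁^k x₂^m ⊗ x₀^(m₂-ℓ) x₁^ℓ` is a linear functional vanishing on every
`v_{k',ℓ',m'}` except `v_{k,ℓ,m}`, where it equals `(m₁)_m (m₁-m)_k (m₂)_ℓ ≠ 0` as long as
`k + ℓ + m ≤ min m₁ m₂`. A family with such a diagonal dual family is linearly independent.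
-/

open MvPolynomial LinearMap Finset

theorem linearIndependent_of_dual_diagonal {K M ι : Type*} [Field K] [AddCommGroup M]
    [Module K M] {v : ι → M} (L : ι → M →ₗ[K] K) (hoff : ∀ i j, i ≠ j → L i (v j) = 0)
    (hdiag : ∀ i, L i (v i) ≠ 0) : LinearIndependent K v := by
  classical
  refine LinearIndependent.of_comp (LinearMap.pi L) ?_
  have hdual : LinearMap.pi L ∘ v = fun j => Pi.single j (L j (v j)) := by
    ext j i
    by_cases h : i = j
    · subst h; simp
    · simp [h, hoff i j h]
  rw [hdual]
  exact Pi.linearIndependent_single_of_ne_zero hdiag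

namespace LinearMap

variable {R M N : Type*} [CommSemiring R] [AddCommMonoid M] [AddCommMonoid N] [Module R M]
  [Module R N]

theorem rTensor_add_lTensor_pow_tmul (f : Module.End R M) (g : Module.End R N) (n : ℕ)
    (p : M) (q : N) :
    ((rTensor N f + lTensor M g) ^ n) (p ⊗ₜ[R] q) =
      ∑ i ∈ Finset.range (n + 1), (n.choose i : R) • ((f ^ i) p ⊗ₜ[R] (g ^ (n - i)) q) := by
  have hcomm : Commute (rTensor N f) (lTensor M g) := by
    simp only [Commute, SemiconjBy, Module.End.mul_eq_comp, rTensor_comp_lTensor,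
      lTensor_comp_rTensor]
  rw [hcomm.add_pow]
  simp [rTensor_pow, lTensor_pow, Nat.cast_smul_eq_nsmul]

theorem rTensor_add_lTensor_pow_tmul_of_apply_eq_zero (f : Module.End R M)
    (g : Module.End R N) (n : ℕ) {p : M} (hp : f p = 0) (q : N) :
    ((rTensor N f + lTensor M g) ^ n) (p ⊗ₜ[R] q) = p ⊗ₜ[R] (g ^ n) q := by
  induction n with
  | zero => simp
  | succ n ih => simp [pow_succ', ih, hp]

end LinearMap

namespace MvPolynomial

variable {σ R : Type*} [CommSemiring R]

noncomputable def xPDeriv (i j : σ) : Module.End R (MvPolynomial σ R) :=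
  (LinearMap.mulLeft R (X i)).comp (pderiv j).toLinearMap

theorem xPDeriv_apply (i j : σ) (p : MvPolynomial σ R) : xPDeriv i j p = X i * pderiv j p :=
  rfl

theorem pderiv_X_pow_of_ne {i j : σ} (h : i ≠ j) (n : ℕ) :
    pderiv j (X i ^ n : MvPolynomial σ R) = 0 := by
  simp [pderiv_X_of_ne h]

theorem xPDeriv_pow_X_pow_mul {i j : σ} (hij : i ≠ j) (N n : ℕ) {r : MvPolynomial σ R}
    (hr : pderiv j r = 0) :
    (xPDeriv i j ^ n) (X j ^ N * r) = (N.descFactorial n : R) • (X j ^ (N - n) * X i ^ n * r) := by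
  induction n with
  | zero => simp
  | succ n ih =>
    rw [pow_succ', Module.End.mul_apply, ih, map_smul, xPDeriv_apply, pderiv_mul,
      pderiv_mul, pderiv_pow, pderiv_X_self, pderiv_X_pow_of_ne hij, hr,
      Nat.descFactorial_succ, show N - (n + 1) = N - n - 1 by omega]
    simp only [smul_eq_C_mul, Nat.cast_mul, map_mul, map_natCast]
    ring

theorem xPDeriv_pow_X_pow {i j : σ} (hij : i ≠ j) (N n : ℕ) :
    (xPDeriv i j ^ n) (X j ^ N : MvPolynomial σ R) =
      (N.descFactorial n : R) • (X j ^ (N - n) * X i ^ n) := by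
  simpa using xPDeriv_pow_X_pow_mul hij N n (r := 1) (by simp)

noncomputable def coeffTmul (a b : σ →₀ ℕ) :
    MvPolynomial σ R ⊗[R] MvPolynomial σ R →ₗ[R] R :=
  (TensorProduct.lid R R).toLinearMap ∘ₗ TensorProduct.map (lcoeff R a) (lcoeff R b)

@[simp]
theorem coeffTmul_tmul (a b : σ →₀ ℕ) (p q : MvPolynomial σ R) :
    coeffTmul a b (p ⊗ₜ[R] q) = coeff a p * coeff b q := by
  simp [coeffTmul, lcoeff]

end MvPolynomial

theorem derOp_single (a b : Fin 3) (c : ℂ) : derOp (Matrix.single a b c) = c • xPDeriv a b := by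
  simp [derOp, xPDeriv, Matrix.single_apply, ite_and, ite_smul]

theorem conj_neg_transpose_Y₁mat :
    Bmat * (-(Matrix.transpose Y₁mat)) * Bmat = Matrix.single 2 1 1 := by
  ext i j
  fin_cases i <;> fin_cases j <;>
    simp [Bmat, Y₁mat, Matrix.mul_apply, Matrix.vecMul, dotProduct, Fin.sum_univ_three,
      Matrix.single_apply]

theorem conj_neg_transpose_Y₂mat :
    Bmat * (-(Matrix.transpose Y₂mat)) * Bmat = Matrix.single 1 0 1 := by
  ext i j
  fin_cases i <;> fin_cases j <;>
    simp [Bmat, Y₂mat, Matrix.mul_apply, Matrix.vecMul, dotProduct, Fin.sum_univ_three,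
      Matrix.single_apply]

theorem conj_neg_transpose_Y₃mat :
    Bmat * (-(Matrix.transpose Y₃mat)) * Bmat = Matrix.single 2 0 (-1) := by
  ext i j
  fin_cases i <;> fin_cases j <;>
    simp [Bmat, Y₃mat, Matrix.mul_apply, Matrix.vecMul, dotProduct, Fin.sum_univ_three,
      Matrix.single_apply]

theorem psiOp_Y₁mat :
    psiOp Y₁mat = rTensor PolySpace (xPDeriv 1 0) + lTensor PolySpace (xPDeriv 2 1) := by
  rw [psiOp, conj_neg_transpose_Y₁mat, Y₁mat, derOp_single, derOp_single, one_smul, one_smul]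

theorem psiOp_Y₂mat :
    psiOp Y₂mat = rTensor PolySpace (xPDeriv 2 1) + lTensor PolySpace (xPDeriv 1 0) := by
  rw [psiOp, conj_neg_transpose_Y₂mat, Y₂mat, derOp_single, derOp_single, one_smul, one_smul]

theorem psiOp_Y₃mat :
    psiOp Y₃mat =
      rTensor PolySpace (xPDeriv 2 0) + lTensor PolySpace ((-1 : ℂ) • xPDeriv 2 0) := by
  rw [psiOp, conj_neg_transpose_Y₃mat, Y₃mat, derOp_single, derOp_single, one_smul]

theorem psiOp_Y₃mat_pow_apply (m a a' : ℕ) :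
    (psiOp Y₃mat ^ m) ((X 0 ^ a : PolySpace) ⊗ₜ[ℂ] (X 0 ^ a' : PolySpace)) =
      ∑ s ∈ range (m + 1),
        ((m.choose s : ℂ) * (-1) ^ (m - s) * a.descFactorial s * a'.descFactorial (m - s)) •
          ((X 0 ^ (a - s) * X 2 ^ s) ⊗ₜ[ℂ] (X 0 ^ (a' - (m - s)) * X 2 ^ (m - s))) := by
  rw [psiOp_Y₃mat, rTensor_add_lTensor_pow_tmul]
  refine sum_congr rfl fun s _ => ?_
  rw [smul_pow, LinearMap.smul_apply, xPDeriv_pow_X_pow (by decide),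
    xPDeriv_pow_X_pow (by decide), TensorProduct.tmul_smul, TensorProduct.tmul_smul]
  simp only [← TensorProduct.smul_tmul', smul_smul]
  congr 1
  ring

theorem psiOp_Y₂mat_pow_apply (ℓ a c a' c' : ℕ) :
    (psiOp Y₂mat ^ ℓ) ((X 0 ^ a * X 2 ^ c : PolySpace) ⊗ₜ[ℂ] (X 0 ^ a' * X 2 ^ c' : PolySpace)) =
      (a'.descFactorial ℓ : ℂ) •
        ((X 0 ^ a * X 2 ^ c) ⊗ₜ[ℂ] (X 0 ^ (a' - ℓ) * X 1 ^ ℓ * X 2 ^ c')) := by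
  have hkill : xPDeriv 2 1 (X 0 ^ a * X 2 ^ c : PolySpace) = 0 := by
    simp [xPDeriv_apply]
  rw [psiOp_Y₂mat, rTensor_add_lTensor_pow_tmul_of_apply_eq_zero _ _ _ hkill,
    xPDeriv_pow_X_pow_mul (by decide) _ _ (pderiv_X_pow_of_ne (by decide) _),
    TensorProduct.tmul_smul]

theorem psiOp_Y₁mat_pow_apply (k a c a' b' c' : ℕ) :
    (psiOp Y₁mat ^ k)
        ((X 0 ^ a * X 2 ^ c : PolySpace) ⊗ₜ[ℂ] (X 0 ^ a' * X 1 ^ b' * X 2 ^ c' : PolySpace)) =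
      ∑ t ∈ range (k + 1), ((k.choose t : ℂ) * a.descFactorial t * b'.descFactorial (k - t)) •
        ((X 0 ^ (a - t) * X 1 ^ t * X 2 ^ c) ⊗ₜ[ℂ]
          (X 0 ^ a' * X 1 ^ (b' - (k - t)) * X 2 ^ (c' + (k - t)))) := by
  have hsecond :
      (X 0 ^ a' * X 1 ^ b' * X 2 ^ c' : PolySpace) = X 1 ^ b' * (X 0 ^ a' * X 2 ^ c') := by
    ring
  rw [psiOp_Y₁mat, rTensor_add_lTensor_pow_tmul, hsecond]
  refine sum_congr rfl fun t _ => ?_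
  rw [xPDeriv_pow_X_pow_mul (by decide) _ _ (pderiv_X_pow_of_ne (by decide) _),
    xPDeriv_pow_X_pow_mul (by decide) _ _ (by simp),
    TensorProduct.tmul_smul, ← TensorProduct.smul_tmul', smul_smul, smul_smul]
  congr 1
  · ring
  · congr 1
    ring

theorem vklm_eq_sum (m₁ m₂ k ℓ m : ℕ) :
    vklm m₁ m₂ k ℓ m =
      ∑ s ∈ range (m + 1), ∑ t ∈ range (k + 1),
        ((m.choose s : ℂ) * (-1) ^ (m - s) * m₁.descFactorial s * m₂.descFactorial (m - s) *
            (m₂ - (m - s)).descFactorial ℓ * k.choose t * (m₁ - s).descFactorial t *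
            ℓ.descFactorial (k - t)) •
          ((X 0 ^ (m₁ - s - t) * X 1 ^ t * X 2 ^ s : PolySpace) ⊗ₜ[ℂ]
            (X 0 ^ (m₂ - (m - s) - ℓ) * X 1 ^ (ℓ - (k - t)) * X 2 ^ (m - s + (k - t)) :
              PolySpace)) := by
  rw [vklm, Module.End.mul_apply, Module.End.mul_apply, psiOp_Y₃mat_pow_apply, map_sum,
    map_sum]
  refine sum_congr rfl fun s _ => ?_
  rw [map_smul, map_smul, psiOp_Y₂mat_pow_apply, map_smul, psiOp_Y₁mat_pow_apply, smul_sum,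
    smul_sum]
  refine sum_congr rfl fun t _ => ?_
  rw [smul_smul, smul_smul]
  congr 1
  ring

noncomputable def expVec (a b c : ℕ) : Fin 3 →₀ ℕ :=
  Finsupp.single 0 a + Finsupp.single 1 b + Finsupp.single 2 c

theorem X_pow_mul_X_pow_mul_X_pow (a b c : ℕ) :
    (X 0 ^ a * X 1 ^ b * X 2 ^ c : PolySpace) = monomial (expVec a b c) 1 := by
  simp [expVec, X_pow_eq_monomial, monomial_mul]

theorem expVec_inj {a b c a' b' c' : ℕ} :
    expVec a b c = expVec a' b' c' ↔ a = a' ∧ b = b' ∧ c = c' := by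
  refine ⟨fun h => ⟨?_, ?_, ?_⟩, by rintro ⟨rfl, rfl, rfl⟩; rfl⟩ <;>
  [have := DFunLike.congr_fun h 0; have := DFunLike.congr_fun h 1;
    have := DFunLike.congr_fun h 2] <;>
  simpa [expVec] using this

theorem coeff_X_pow_mul_X_pow_mul_X_pow (a b c a' b' c' : ℕ) :
    coeff (expVec a' b' c') (X 0 ^ a * X 1 ^ b * X 2 ^ c : PolySpace) =
      if a = a' ∧ b = b' ∧ c = c' then 1 else 0 := by
  rw [X_pow_mul_X_pow_mul_X_pow, coeff_monomial]
  exact if_congr expVec_inj rfl rfl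

noncomputable def vklmDual (m₁ m₂ k ℓ m : ℕ) : PolySpace ⊗[ℂ] PolySpace →ₗ[ℂ] ℂ :=
  coeffTmul (expVec (m₁ - m - k) k m) (expVec (m₂ - ℓ) ℓ 0)

theorem vklmDual_smul_tmul (m₁ m₂ k ℓ m : ℕ) (r : ℂ) (a b c a' b' c' : ℕ) :
    vklmDual m₁ m₂ k ℓ m
        (r • ((X 0 ^ a * X 1 ^ b * X 2 ^ c : PolySpace) ⊗ₜ[ℂ] (X 0 ^ a' * X 1 ^ b' * X 2 ^ c'))) =
      if (a = m₁ - m - k ∧ b = k ∧ c = m) ∧ (a' = m₂ - ℓ ∧ b' = ℓ ∧ c' = 0) then r else 0 := by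
  rw [map_smul, vklmDual, coeffTmul_tmul, coeff_X_pow_mul_X_pow_mul_X_pow,
    coeff_X_pow_mul_X_pow_mul_X_pow, ite_zero_mul_ite_zero, mul_one, smul_ite, smul_eq_mul,
    mul_one, smul_zero]

theorem vklmDual_vklm_of_ne (m₁ m₂ : ℕ) {k ℓ m k' ℓ' m' : ℕ}
    (hne : (k', ℓ', m') ≠ (k, ℓ, m)) :
    vklmDual m₁ m₂ k ℓ m (vklm m₁ m₂ k' ℓ' m') = 0 := by
  rw [vklm_eq_sum, map_sum]
  refine sum_eq_zero fun s hs => ?_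
  rw [map_sum]
  refine sum_eq_zero fun t ht => ?_
  rw [vklmDual_smul_tmul, if_neg]
  simp only [mem_range] at hs ht
  rintro ⟨⟨-, rfl, rfl⟩, -, hℓ, hm⟩
  exact hne (by simp only [Prod.mk.injEq]; omega)

theorem vklmDual_vklm_self (m₁ m₂ k ℓ m : ℕ) :
    vklmDual m₁ m₂ k ℓ m (vklm m₁ m₂ k ℓ m) =
      m₁.descFactorial m * (m₁ - m).descFactorial k * m₂.descFactorial ℓ := by
  rw [vklm_eq_sum, map_sum, sum_eq_single_of_mem m (self_mem_range_succ m), map_sum,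
    sum_eq_single_of_mem k (self_mem_range_succ k), vklmDual_smul_tmul, if_pos (by simp)]
  · simp only [Nat.choose_self, Nat.sub_self, Nat.sub_zero, Nat.descFactorial_zero]
    push_cast
    ring
  · intro t _ ht
    rw [vklmDual_smul_tmul, if_neg (by tauto)]
  · intro s _ hs
    rw [map_sum]
    refine sum_eq_zero fun t _ => ?_
    rw [vklmDual_smul_tmul, if_neg (by tauto)]

/-- for `m₁ ≥ d` and `m₂ ≥ d`, the vectors `v_{k,ℓ,m}` with `k + ℓ + m ≤ d`
are linearly independent. -/
theorem stmt_12 (d m₁ m₂ : ℕ) (h₁ : d ≤ m₁) (h₂ : d ≤ m₂) :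
    LinearIndependent ℂ
      (fun x : {klm : ℕ × ℕ × ℕ // klm.1 + klm.2.1 + klm.2.2 ≤ d} =>
        vklm m₁ m₂ x.val.1 x.val.2.1 x.val.2.2) := by
  refine linearIndependent_of_dual_diagonal (fun x => vklmDual m₁ m₂ x.val.1 x.val.2.1 x.val.2.2)
    (fun x y hxy => vklmDual_vklm_of_ne m₁ m₂ fun h => hxy (Subtype.ext h.symm)) fun x => ?_
  obtain ⟨⟨k, ℓ, m⟩, hx : k + ℓ + m ≤ d⟩ := x
  rw [vklmDual_vklm_self]
  simp only [ne_eq, mul_eq_zero, Nat.cast_eq_zero, Nat.descFactorial_eq_zero_iff_lt, not_or]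
  omega
end
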